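/- arXiv:2511.00847 — 4 statements merged into one kernel-verified Lean document; each statement's English description precedes it below -/
import Mathlib

section
/- Let N be a positive integer and let ξ, λ be reals with 0 < λ < ξ. Suppose a sequence x_1, ..., x_N of reals satisfies x_j ≥ ξ + (1/j)·Σ_{k=1}^{j-1} x_k − jλ/N for all j ∈ [N]. Then x_j ≥ (ξ − jλ/N)·Σ_{k=1}^{j} 1/k for all j ∈ [N]. -/
/-
With `c = ξ - jλ/N`, which is antitone in `j`, strong induction gives `x_k ≥ c H_k` for all
`k < j`, so the hypothesis at `j` yields `x_j ≥ c + (c/j) Σ_{k<j} H_k`. The identity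
`Σ_{k ≤ m} H_k = (m + 1) H_m - m` turns the right-hand side into exactly `c H_j`.
-/

open Finset

lemma sum_Icc_harmonic (m : ℕ) :
    ∑ k ∈ Icc 1 m, harmonic k = (m + 1) * harmonic m - m := by
  induction m with
  | zero => simp
  | succ m ih =>
    rw [sum_Icc_succ_top (by omega), ih, harmonic_succ]
    push_cast
    field_simp
    ring

lemma harmonic_succ_le_of_sum_le {c S : ℝ} (m : ℕ)
    (hS : c * ∑ k ∈ Icc 1 m, (harmonic k : ℝ) ≤ S) :
    c * harmonic (m + 1) ≤ c + 1 / ((m + 1 : ℕ) : ℝ) * S := by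
  have hsum : ∑ k ∈ Icc 1 m, (harmonic k : ℝ) = (m + 1) * harmonic m - m := by
    exact_mod_cast sum_Icc_harmonic m
  rw [hsum] at hS
  have hm : (0 : ℝ) < m + 1 := by positivity
  calc c * harmonic (m + 1) = c + 1 / (m + 1) * (c * ((m + 1) * harmonic m - m)) := by
        push_cast [harmonic_succ]
        field_simp
        ring
    _ ≤ c + 1 / ((m + 1 : ℕ) : ℝ) * S := by
        push_cast
        gcongr

theorem harmonic_mul_le_of_le_add_average {a x : ℕ → ℝ} {N : ℕ} (ha : Antitone a)
    (hx : ∀ j ∈ Icc 1 N, a j + 1 / (j : ℝ) * ∑ k ∈ Icc 1 (j - 1), x k ≤ x j) :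
    ∀ j ∈ Icc 1 N, a j * harmonic j ≤ x j := by
  intro j
  induction j using Nat.strong_induction_on with
  | _ j ih =>
  intro hj
  obtain ⟨m, rfl⟩ : ∃ m, j = m + 1 := ⟨j - 1, by grind⟩
  have hsum : a (m + 1) * ∑ k ∈ Icc 1 m, (harmonic k : ℝ) ≤ ∑ k ∈ Icc 1 m, x k := by
    rw [mul_sum]
    refine sum_le_sum fun k hk => ?_
    have hkm : k < m + 1 := by grind
    calc a (m + 1) * harmonic k ≤ a k * harmonic k := by
          gcongr
          · exact_mod_cast (harmonic_pos (by grind)).le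
          · exact ha hkm.le
      _ ≤ x k := ih k hkm (by grind)
  exact (harmonic_succ_le_of_sum_le m hsum).trans (hx (m + 1) hj)

theorem stmt_0_general (N : ℕ) (ξ lam : ℝ) (hlam : 0 < lam)
    (x : ℕ → ℝ)
    (hx : ∀ j ∈ Finset.Icc 1 N,
      x j ≥ ξ + (1 / (j : ℝ)) * (∑ k ∈ Finset.Icc 1 (j - 1), x k) - (j : ℝ) * lam / N) :
    ∀ j ∈ Finset.Icc 1 N,
      x j ≥ (ξ - (j : ℝ) * lam / N) * (∑ k ∈ Finset.Icc 1 j, (1 : ℝ) / k) := by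
  have ha : Antitone fun j : ℕ => ξ - (j : ℝ) * lam / N := fun i j hij => by
    dsimp only
    gcongr
  intro j hj
  have key := harmonic_mul_le_of_le_add_average (x := x) ha
    (fun j hj => by linarith [hx j hj]) j hj
  rw [harmonic_eq_sum_Icc] at key
  push_cast [one_div] at key ⊢
  exact key

theorem stmt_0 (N : ℕ) (hN : 0 < N) (ξ lam : ℝ) (hlam : 0 < lam) (hxl : lam < ξ)
    (x : ℕ → ℝ)
    (hx : ∀ j ∈ Finset.Icc 1 N,
      x j ≥ ξ + (1 / (j : ℝ)) * (∑ k ∈ Finset.Icc 1 (j - 1), x k) - (j : ℝ) * lam / N) :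
    ∀ j ∈ Finset.Icc 1 N,
      x j ≥ (ξ - (j : ℝ) * lam / N) * (∑ k ∈ Finset.Icc 1 j, (1 : ℝ) / k) :=
  stmt_0_general N ξ lam hlam x hx
end

section
/- Let p > 0, γ > 0, and let g, h : [0,p] → ℝ be differentiable with g Lipschitz with constant κ, and h'(c) − p·g'(c) ≥ γ for all c. Fix ū ∈ ℝ and Δ ≥ 0. Suppose (c'', l'') satisfies c'' ∈ [0,p], l'' ≥ g(c''), h(c'') − p·l'' ≥ ū − Δ, and c'' + Δ/γ ≤ p. Then the point (c̃, l̃) with c̃ = c'' + Δ/γ and l̃ = g(c̃) satisfies c̃ ∈ [0,p], l̃ ≥ g(c̃), h(c̃) − p·l̃ ≥ ū, and |c̃ − c''| + |l̃ − g(c'')| ≤ (1 + κ)·Δ/γ. -/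
/-! The function `F c = h c - p * g c` grows at rate at least `γ` on `[0, p]`, so moving from
`c''` to `c'' + Δ / γ` raises it by at least `Δ`, which makes up for the relaxation `ū - Δ`;
the bound on the displacement is the Lipschitz estimate for `g`. -/

theorem Convex.mul_sub_le_sub_of_hasDerivAt {s : Set ℝ} (hs : Convex ℝ s) {F F' : ℝ → ℝ}
    {γ : ℝ} (hF : ∀ x ∈ s, HasDerivAt F (F' x) x) (hγ : ∀ x ∈ s, γ ≤ F' x)
    {x y : ℝ} (hx : x ∈ s) (hy : y ∈ s) (hxy : x ≤ y) :
    γ * (y - x) ≤ F y - F x :=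
  hs.mul_sub_le_image_sub_of_le_deriv
    (fun c hc => (hF c hc).continuousAt.continuousWithinAt)
    (fun c hc => (hF c (interior_subset hc)).differentiableAt.differentiableWithinAt)
    (fun c hc => (hF c (interior_subset hc)).deriv ▸ hγ c (interior_subset hc))
    x hx y hy hxy

theorem Convex.add_le_apply_add_div_of_hasDerivAt {s : Set ℝ} (hs : Convex ℝ s)
    {F F' : ℝ → ℝ} {γ : ℝ} (hγ : 0 < γ) (hF : ∀ x ∈ s, HasDerivAt F (F' x) x)
    (hF' : ∀ x ∈ s, γ ≤ F' x) {x Δ : ℝ} (hΔ : 0 ≤ Δ) (hx : x ∈ s) (hxΔ : x + Δ / γ ∈ s) :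
    F x + Δ ≤ F (x + Δ / γ) := by
  have hgain := hs.mul_sub_le_sub_of_hasDerivAt hF hF' hx hxΔ
    (le_add_of_nonneg_right (div_nonneg hΔ hγ.le))
  rw [add_sub_cancel_left, mul_div_cancel₀ Δ hγ.ne'] at hgain
  linarith

theorem abs_add_sub_add_abs_sub_le {s : Set ℝ} {g : ℝ → ℝ} {κ : ℝ}
    (hg : ∀ x ∈ s, ∀ y ∈ s, |g x - g y| ≤ κ * |x - y|) {x d : ℝ} (hd : 0 ≤ d)
    (hx : x ∈ s) (hxd : x + d ∈ s) :
    |(x + d) - x| + |g (x + d) - g x| ≤ (1 + κ) * d := by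
  have hLip := hg _ hxd _ hx
  rw [add_sub_cancel_left, abs_of_nonneg hd] at hLip ⊢
  linarith

theorem stmt_6 (p γ κ : ℝ) (hp : 0 < p) (hγ : 0 < γ)
    (g h g' h' : ℝ → ℝ)
    (hg : ∀ c ∈ Set.Icc 0 p, HasDerivAt g (g' c) c)
    (hh : ∀ c ∈ Set.Icc 0 p, HasDerivAt h (h' c) c)
    (hgLip : ∀ x ∈ Set.Icc 0 p, ∀ y ∈ Set.Icc 0 p, |g x - g y| ≤ κ * |x - y|)
    (hder : ∀ c ∈ Set.Icc 0 p, h' c - p * g' c ≥ γ)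
    (ubar Δ : ℝ) (hΔ : 0 ≤ Δ)
    (c'' l'' : ℝ) (hc'' : c'' ∈ Set.Icc 0 p) (hl'' : l'' ≥ g c'')
    (hfeas : h c'' - p * l'' ≥ ubar - Δ) (hroom : c'' + Δ / γ ≤ p) :
    c'' + Δ / γ ∈ Set.Icc 0 p ∧
      g (c'' + Δ / γ) ≥ g (c'' + Δ / γ) ∧
      h (c'' + Δ / γ) - p * g (c'' + Δ / γ) ≥ ubar ∧
      |(c'' + Δ / γ) - c''| + |g (c'' + Δ / γ) - g c''| ≤ (1 + κ) * Δ / γ := by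
  have hshift : 0 ≤ Δ / γ := div_nonneg hΔ hγ.le
  have hmem : c'' + Δ / γ ∈ Set.Icc 0 p := ⟨add_nonneg hc''.1 hshift, hroom⟩
  have hgain : h c'' - p * g c'' + Δ ≤ h (c'' + Δ / γ) - p * g (c'' + Δ / γ) :=
    (convex_Icc 0 p).add_le_apply_add_div_of_hasDerivAt (F := fun c => h c - p * g c) hγ
      (fun c hc => (hh c hc).sub ((hg c hc).const_mul p)) hder hΔ hc'' hmem
  have hcost : p * g c'' ≤ p * l'' := mul_le_mul_of_nonneg_left hl'' hp.le
  refine ⟨hmem, le_rfl, by linarith, ?_⟩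
  rw [mul_div_assoc]
  exact abs_add_sub_add_abs_sub_le hgLip hshift hc'' hmem
end

section
/- Let p > 0, γ > 0, κ ≥ 0, L > 0, and let g, h : [0,p] → ℝ be differentiable with g κ-Lipschitz, g(c) ≤ L for all c, and h'(c) − p·g'(c) ≥ γ. Fix ū and Δ ≥ 0 with the property that the maximizer (c'',l'') of H(c,l)=p·l−c·l over S₂ = {(c,l): c∈[0,p], l∈[g(c),L], h(c)−p·l ≥ ū−Δ} satisfies c''+Δ/γ ≤ p. Let (c',l') maximize H over S₁ = {(c,l): c∈[0,p], l∈[g(c),L], h(c)−p·l ≥ ū}, and assume both maximizers exist. Then H(c'',l'') − H(c',l') ≤ (L+p)·(1+κ)·Δ/γ. -/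
/-!
Shift the relaxed maximizer `(c'', l'')` to the price `c₁ = c'' + Δ / γ`. Since
`(h - p g)' ≥ γ`, this raises `h - p g` by at least `Δ`; keeping the slack `l - g c` of
the commitment (capped at `L`) therefore gives a point `(c₁, l₁)` that is feasible for the
exact constraint. The `κ`-Lipschitz bound on `g` keeps `l₁` within `κ Δ / γ` of `l''`, so
`H` drops by at most `(L + p κ) Δ / γ` along the way, and `H(c', l')` is at least `H(c₁, l₁)`.
-/

open Set

theorem Convex.mul_sub_le_sub_of_hasDerivAt_s8 {D : Set ℝ} (hD : Convex ℝ D) {f f' : ℝ → ℝ}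
    (hf : ∀ x ∈ D, HasDerivAt f (f' x) x) {C : ℝ} (hC : ∀ x ∈ D, C ≤ f' x)
    {x y : ℝ} (hx : x ∈ D) (hy : y ∈ D) (hxy : x ≤ y) : C * (y - x) ≤ f y - f x := by
  refine hD.mul_sub_le_image_sub_of_le_deriv
    (fun z hz => (hf z hz).continuousAt.continuousWithinAt)
    (fun z hz => (hf z (interior_subset hz)).differentiableAt.differentiableWithinAt)
    (fun z hz => ?_) x hx y hy hxy
  rw [(hf z (interior_subset hz)).deriv]
  exact hC z (interior_subset hz)

theorem exists_mem_Icc_sub_le_of_abs_sub_le {g : ℝ → ℝ} {c c₁ l L δ : ℝ}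
    (hl : l ∈ Icc (g c) L) (hc₁ : g c₁ ≤ L) (hg : |g c₁ - g c| ≤ δ) :
    ∃ l₁ ∈ Icc (g c₁) L, l₁ - g c₁ ≤ l - g c ∧ l - δ ≤ l₁ := by
  have hδ := abs_le.mp hg
  refine ⟨min (l + g c₁ - g c) L, ⟨le_min (by linarith [hl.1]) hc₁, min_le_right _ _⟩,
    by linarith [min_le_left (l + g c₁ - g c) L], le_min (by linarith) ?_⟩
  linarith [hl.2, abs_nonneg (g c₁ - g c)]

theorem mul_sub_mul_sub_le_of_shift {p c t l l₁ L δ : ℝ} (hc : c ∈ Icc 0 p) (ht : 0 ≤ t)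
    (hl₁ : l₁ ≤ L) (hδ : 0 ≤ δ) (hll₁ : l - δ ≤ l₁) :
    (p * l - c * l) - (p * l₁ - (c + t) * l₁) ≤ p * δ + t * L := by
  have hmargin : (p - c) * (l - l₁) ≤ p * δ :=
    calc (p - c) * (l - l₁) ≤ (p - c) * δ :=
          mul_le_mul_of_nonneg_left (by linarith) (by linarith [hc.2])
      _ ≤ p * δ := mul_le_mul_of_nonneg_right (by linarith [hc.1]) hδ
  calc (p * l - c * l) - (p * l₁ - (c + t) * l₁) = (p - c) * (l - l₁) + t * l₁ := by ring
    _ ≤ p * δ + t * L := add_le_add hmargin (mul_le_mul_of_nonneg_left hl₁ ht)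

theorem stmt_8_general (p γ κ L : ℝ) (hp : 0 < p) (hγ : 0 < γ) (hκ : 0 ≤ κ) (hL : 0 < L)
    (g h g' h' : ℝ → ℝ)
    (hg : ∀ c ∈ Set.Icc 0 p, HasDerivAt g (g' c) c)
    (hh : ∀ c ∈ Set.Icc 0 p, HasDerivAt h (h' c) c)
    (hgLip : ∀ x ∈ Set.Icc 0 p, ∀ y ∈ Set.Icc 0 p, |g x - g y| ≤ κ * |x - y|)
    (hgL : ∀ c ∈ Set.Icc 0 p, g c ≤ L)
    (hder : ∀ c ∈ Set.Icc 0 p, h' c - p * g' c ≥ γ)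
    (ubar Δ : ℝ) (hΔ : 0 ≤ Δ)
    (c' l' c'' l'' : ℝ)
    -- (c',l') maximizes H over S₁
    (hmax1 : ∀ c ∈ Set.Icc 0 p, ∀ l ∈ Set.Icc (g c) L, h c - p * l ≥ ubar →
        p * l - c * l ≤ p * l' - c' * l')
    (hmem2 : c'' ∈ Set.Icc 0 p ∧ l'' ∈ Set.Icc (g c'') L ∧ h c'' - p * l'' ≥ ubar - Δ)
    (hroom : c'' + Δ / γ ≤ p) :
    (p * l'' - c'' * l'') - (p * l' - c' * l') ≤ (L + p) * (1 + κ) * Δ / γ := by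
  obtain ⟨hc'', hl'', hu''⟩ := hmem2
  set t := Δ / γ with ht_def
  have ht : 0 ≤ t := div_nonneg hΔ hγ.le
  have hc₁ : c'' + t ∈ Icc 0 p := ⟨by linarith [hc''.1], hroom⟩
  have hgain : Δ ≤ (h (c'' + t) - p * g (c'' + t)) - (h c'' - p * g c'') := by
    have := (convex_Icc 0 p).mul_sub_le_sub_of_hasDerivAt_s8
      (fun c hc => (hh c hc).sub ((hg c hc).const_mul p)) (fun c hc => (hder c hc).le)
      hc'' hc₁ (by linarith)
    rwa [add_sub_cancel_left, ht_def, mul_div_cancel₀ _ hγ.ne'] at this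
  have hlip : |g (c'' + t) - g c''| ≤ κ * t := by
    simpa [abs_of_nonneg ht] using hgLip _ hc₁ _ hc''
  obtain ⟨l₁, hl₁, hslack, hclose⟩ :=
    exists_mem_Icc_sub_le_of_abs_sub_le hl'' (hgL _ hc₁) hlip
  have hfeas : h (c'' + t) - p * l₁ ≥ ubar := by
    linarith [mul_le_mul_of_nonneg_left hslack hp.le]
  calc (p * l'' - c'' * l'') - (p * l' - c' * l')
      ≤ (p * l'' - c'' * l'') - (p * l₁ - (c'' + t) * l₁) := by
        linarith [hmax1 _ hc₁ l₁ hl₁ hfeas]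
    _ ≤ p * (κ * t) + t * L :=
        mul_sub_mul_sub_le_of_shift hc'' ht hl₁.2 (mul_nonneg hκ ht) hclose
    _ ≤ (L + p) * (1 + κ) * Δ / γ := by
        rw [mul_div_assoc, ← ht_def]
        nlinarith [mul_nonneg (mul_nonneg hL.le hκ) ht, mul_nonneg hp.le ht]

theorem stmt_8 (p γ κ L : ℝ) (hp : 0 < p) (hγ : 0 < γ) (hκ : 0 ≤ κ) (hL : 0 < L)
    (g h g' h' : ℝ → ℝ)
    (hg : ∀ c ∈ Set.Icc 0 p, HasDerivAt g (g' c) c)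
    (hh : ∀ c ∈ Set.Icc 0 p, HasDerivAt h (h' c) c)
    (hgLip : ∀ x ∈ Set.Icc 0 p, ∀ y ∈ Set.Icc 0 p, |g x - g y| ≤ κ * |x - y|)
    (hgL : ∀ c ∈ Set.Icc 0 p, g c ≤ L)
    (hder : ∀ c ∈ Set.Icc 0 p, h' c - p * g' c ≥ γ)
    (ubar Δ : ℝ) (hΔ : 0 ≤ Δ)
    (c' l' c'' l'' : ℝ)
    -- (c',l') maximizes H over S₁
    (hmem1 : c' ∈ Set.Icc 0 p ∧ l' ∈ Set.Icc (g c') L ∧ h c' - p * l' ≥ ubar)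
    (hmax1 : ∀ c ∈ Set.Icc 0 p, ∀ l ∈ Set.Icc (g c) L, h c - p * l ≥ ubar →
        p * l - c * l ≤ p * l' - c' * l')
    -- (c'',l'') maximizes H over S₂
    (hmem2 : c'' ∈ Set.Icc 0 p ∧ l'' ∈ Set.Icc (g c'') L ∧ h c'' - p * l'' ≥ ubar - Δ)
    (hmax2 : ∀ c ∈ Set.Icc 0 p, ∀ l ∈ Set.Icc (g c) L, h c - p * l ≥ ubar - Δ →
        p * l - c * l ≤ p * l'' - c'' * l'')
    (hroom : c'' + Δ / γ ≤ p) :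
    (p * l'' - c'' * l'') - (p * l' - c' * l') ≤ (L + p) * (1 + κ) * Δ / γ :=
  stmt_8_general p γ κ L hp hγ hκ hL g h g' h' hg hh hgLip hgL hder ubar Δ hΔ c' l' c'' l'' hmax1
    hmem2 hroom
end

section
/- Let p > 0, L > 0, B > 0, and let g, h : [0,p] → ℝ be differentiable, with h'(α) − α·g'(α) − g(α) ≥ 0 and h'(α) − p·g'(α) ≥ 0 for all α ∈ [0,p]. Define, for α ∈ [0,p] and β ∈ [0,L], U(α,β) = B·p·(β + g(α)) − B·α·g(α) + B·p·L + B·p·L·(3 + 2h(α)/(p·L) − 2(β+g(α))/L). Then ∂U/∂α ≥ 0 and ∂U/∂β < 0 everywhere, so U attains its maximum over [0,p]×[0,L] at (α,β) = (p,0). -/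
theorem stmt_11 (p L B : ℝ) (hp : 0 < p) (hL : 0 < L) (hB : 0 < B)
    (g h g' h' : ℝ → ℝ)
    (hg : ∀ α ∈ Set.Icc 0 p, HasDerivAt g (g' α) α)
    (hh : ∀ α ∈ Set.Icc 0 p, HasDerivAt h (h' α) α)
    (hcond1 : ∀ α ∈ Set.Icc 0 p, h' α - α * g' α - g α ≥ 0)
    (hcond2 : ∀ α ∈ Set.Icc 0 p, h' α - p * g' α ≥ 0)
    (U : ℝ → ℝ → ℝ)
    (hU : ∀ α β, U α β = B * p * (β + g α) - B * α * g α + B * p * L +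
        B * p * L * (3 + 2 * h α / (p * L) - 2 * (β + g α) / L))
    (hG : ∀ α ∈ Set.Icc 0 p, ∀ β ∈ Set.Icc 0 L,
        3 + 2 * h α / (p * L) - 2 * (β + g α) / L ≥ 0) :
    (∀ α ∈ Set.Icc 0 p, ∀ β ∈ Set.Icc 0 L,
        0 ≤ deriv (fun a => U a β) α ∧ deriv (fun b => U α b) β < 0) ∧
      ∀ α ∈ Set.Icc 0 p, ∀ β ∈ Set.Icc 0 L, U α β ≤ U p 0 := by
  have hp0 : (p : ℝ) ≠ 0 := ne_of_gt hp
  have hL0 : (L : ℝ) ≠ 0 := ne_of_gt hL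
  -- simplified form of U
  have hU' : ∀ α β, U α β = B * (2 * h α - (p + α) * g α) - B * p * β + 4 * B * p * L := by
    intro α β
    rw [hU]
    field_simp
    ring
  set F : ℝ → ℝ := fun a => B * (2 * h a - (p + a) * g a) with hF
  have hFd : ∀ α ∈ Set.Icc (0:ℝ) p,
      HasDerivAt F (B * ((h' α - α * g' α - g α) + (h' α - p * g' α))) α := by
    intro α hα
    have h1 : HasDerivAt (fun a => 2 * h a - (p + a) * g a)
        (2 * h' α - ((0 + 1) * g α + (p + α) * g' α)) α := by
      exact (((hh α hα).const_mul 2).sub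
        (((hasDerivAt_const α p).add (hasDerivAt_id α)).mul (hg α hα)))
    have := h1.const_mul B
    exact this.congr_deriv (by ring)
  have hderivβ : ∀ α β, deriv (fun b => U α b) β = -(B * p) := by
    intro α β
    have : (fun b => U α b) = fun b => F α - B * p * b + 4 * B * p * L := by
      funext b; rw [hU' α b]
    rw [this]
    have hd : HasDerivAt (fun b : ℝ => F α - B * p * b + 4 * B * p * L) (-(B * p)) β := by
      have := (((hasDerivAt_id β).const_mul (B * p)).const_sub (F α)).add_const (4 * B * p * L)
      exact this.congr_deriv (by simp)
    exact hd.deriv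
  have hcont : ContinuousOn F (Set.Icc 0 p) := fun x hx =>
    (hFd x hx).continuousAt.continuousWithinAt
  have hmono : MonotoneOn F (Set.Icc 0 p) := by
    apply monotoneOn_of_deriv_nonneg (convex_Icc 0 p) hcont
    · intro x hx
      rw [interior_Icc] at hx
      exact (hFd x (Set.mem_Icc_of_Ioo hx)).differentiableAt.differentiableWithinAt
    · intro x hx
      rw [interior_Icc] at hx
      have hx' := Set.mem_Icc_of_Ioo hx
      rw [(hFd x hx').deriv]
      have := hcond1 x hx'
      have := hcond2 x hx'
      positivity
  constructor
  · intro α hα β hβ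
    constructor
    · have : (fun a => U a β) = fun a => F a - B * p * β + 4 * B * p * L := by
        funext a; rw [hU' a β]
      rw [this]
      have hd : HasDerivAt (fun a => F a - B * p * β + 4 * B * p * L)
          (B * ((h' α - α * g' α - g α) + (h' α - p * g' α))) α :=
        ((hFd α hα).sub_const (B * p * β)).add_const (4 * B * p * L)
      rw [hd.deriv]
      have := hcond1 α hα
      have := hcond2 α hα
      positivity
    · rw [hderivβ]
      have : 0 < B * p := by positivity
      linarith
  · intro α hα β hβ
    rw [hU' α β, hU' p 0]
    have h1 : F α ≤ F p := hmono hα (Set.right_mem_Icc.2 hp.le) hα.2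
    have h2 : 0 ≤ B * p * β := mul_nonneg (by positivity) hβ.1
    simp only [hF] at h1 ⊢
    nlinarith [h1, h2]
end
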